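/- Let h_s, h_r, h_t be vectors in ℝ^d with h_r ≠ h_s and h_t ≠ h_r. If 1 - cos θ' ≤ ε where θ' is the angle between h_r - h_s and h_t - h_r, then the squared norm of the component of h_r - h_s orthogonal to h_t - h_s is at most 2ε · ‖h_r - h_s‖². -/

import Mathlib

/-!
Write `a = h_r - h_s` and `b = h_t - h_r`, so that `h_t - h_s = a + b`. Both
`‖perpComp a (a + b)‖² ‖a + b‖²` and `‖a‖² ‖b‖² sin²θ'` are Gram determinants, of
`(a, a + b)` and of `(a, b)`, and these agree because the Gram determinant is invariant
under the shear `(a, b) ↦ (a, a + b)`.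
When `⟪a, b⟫ > 0` we have `‖a + b‖ ≥ ‖b‖`, so dividing by `‖a + b‖²` instead of `‖b‖²`
only helps; when `⟪a, b⟫ ≤ 0` we have `ε ≥ 1`, and the bound is trivial.
-/

/-- The component of `x` orthogonal to `y`. -/
noncomputable def perpComp {d : ℕ} (x y : EuclideanSpace ℝ (Fin d)) :
    EuclideanSpace ℝ (Fin d) :=
  x - ((inner ℝ x y : ℝ) / ‖y‖ ^ 2) • y

open InnerProductGeometry

section Gram

variable {E : Type*} [NormedAddCommGroup E] [InnerProductSpace ℝ E]

noncomputable def gramDet (x y : E) : ℝ :=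
  ‖x‖ ^ 2 * ‖y‖ ^ 2 - inner ℝ x y ^ 2

theorem gramDet_le_norm_sq_mul_norm_sq (x y : E) : gramDet x y ≤ ‖x‖ ^ 2 * ‖y‖ ^ 2 :=
  sub_le_self _ (sq_nonneg _)

theorem gramDet_self_add_right (x y : E) : gramDet x (x + y) = gramDet x y := by
  simp only [gramDet, norm_add_sq_real, inner_add_right, real_inner_self_eq_norm_sq]
  ring

theorem gramDet_le_of_one_sub_cos_angle_le {x y : E} {ε : ℝ}
    (h : 1 - Real.cos (angle x y) ≤ ε) : gramDet x y ≤ 2 * ε * (‖x‖ ^ 2 * ‖y‖ ^ 2) := by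
  have hcos : Real.cos (angle x y) ≤ 1 := Real.cos_le_one _
  have hcos' : -1 ≤ Real.cos (angle x y) := Real.neg_one_le_cos _
  have hgram : gramDet x y =
      (‖x‖ * ‖y‖) ^ 2 * ((1 - Real.cos (angle x y)) * (1 + Real.cos (angle x y))) := by
    rw [gramDet, ← cos_angle_mul_norm_mul_norm]
    ring
  have hsin : (1 - Real.cos (angle x y)) * (1 + Real.cos (angle x y)) ≤ ε * 2 :=
    mul_le_mul h (by linarith) (by linarith) (by linarith)
  calc gramDet x y ≤ (‖x‖ * ‖y‖) ^ 2 * (ε * 2) := hgram ▸ by gcongr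
    _ = 2 * ε * (‖x‖ ^ 2 * ‖y‖ ^ 2) := by ring

end Gram

theorem norm_perpComp_sq_mul_norm_sq {d : ℕ} (x y : EuclideanSpace ℝ (Fin d)) :
    ‖perpComp x y‖ ^ 2 * ‖y‖ ^ 2 = gramDet x y := by
  rcases eq_or_ne y 0 with rfl | hy
  · simp [perpComp, gramDet]
  have hy2 : ‖y‖ ^ 2 ≠ 0 := by positivity
  rw [perpComp, norm_sub_sq_real, real_inner_smul_right, norm_smul, Real.norm_eq_abs,
    mul_pow, sq_abs, gramDet]
  field_simp
  ring

theorem norm_perpComp_sq_le {d : ℕ} (x y : EuclideanSpace ℝ (Fin d)) :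
    ‖perpComp x y‖ ^ 2 ≤ ‖x‖ ^ 2 := by
  rcases eq_or_ne y 0 with rfl | hy
  · simp [perpComp]
  have hy2 : 0 < ‖y‖ ^ 2 := by positivity
  refine le_of_mul_le_mul_right ?_ hy2
  rw [norm_perpComp_sq_mul_norm_sq]
  exact gramDet_le_norm_sq_mul_norm_sq x y

theorem straightening_lemma_general {d : ℕ} (hs hr ht : EuclideanSpace ℝ (Fin d)) (ε : ℝ)
    (hloss : 1 - (inner ℝ (hr - hs) (ht - hr) : ℝ) / (‖hr - hs‖ * ‖ht - hr‖) ≤ ε) :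
    ‖perpComp (hr - hs) (ht - hs)‖ ^ 2 ≤ 2 * ε * ‖hr - hs‖ ^ 2 := by
  set a := hr - hs
  set b := ht - hr
  rw [← cos_angle] at hloss
  have hab : ht - hs = a + b := (sub_add_sub_cancel' hr hs ht).symm
  rw [hab]
  rcases le_or_gt (inner ℝ a b) 0 with hinner | hinner
  · have hcos : Real.cos (angle a b) ≤ 0 := by
      rw [cos_angle]
      exact div_nonpos_of_nonpos_of_nonneg hinner (by positivity)
    calc ‖perpComp a (a + b)‖ ^ 2 ≤ ‖a‖ ^ 2 := norm_perpComp_sq_le a (a + b)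
      _ ≤ 2 * ε * ‖a‖ ^ 2 := le_mul_of_one_le_left (sq_nonneg _) (by linarith)
  · have hε : 0 ≤ ε := by linarith [Real.cos_le_one (angle a b)]
    have hnorm : ‖b‖ ^ 2 ≤ ‖a + b‖ ^ 2 := by
      rw [norm_add_sq_real]
      linarith [sq_nonneg ‖a‖]
    have hpos : 0 < ‖a + b‖ ^ 2 := by
      rw [norm_add_sq_real]
      positivity
    refine le_of_mul_le_mul_right ?_ hpos
    calc ‖perpComp a (a + b)‖ ^ 2 * ‖a + b‖ ^ 2 = gramDet a b := by
          rw [norm_perpComp_sq_mul_norm_sq, gramDet_self_add_right]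
      _ ≤ 2 * ε * (‖a‖ ^ 2 * ‖b‖ ^ 2) := gramDet_le_of_one_sub_cos_angle_le hloss
      _ ≤ 2 * ε * ‖a‖ ^ 2 * ‖a + b‖ ^ 2 := by
          rw [← mul_assoc]
          exact mul_le_mul_of_nonneg_left hnorm (by positivity)

/-- Straightening Lemma: if the cosine of the angle `θ'` between `h_r - h_s` and
`h_t - h_r` satisfies `1 - cos θ' ≤ ε`, then the squared norm of the component of
`h_r - h_s` orthogonal to `h_t - h_s` is at most `2ε‖h_r - h_s‖²`. -/
theorem straightening_lemma {d : ℕ} (hs hr ht : EuclideanSpace ℝ (Fin d)) (ε : ℝ)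
    (h1 : hr ≠ hs) (h2 : ht ≠ hr)
    (hloss : 1 - (inner ℝ (hr - hs) (ht - hr) : ℝ) / (‖hr - hs‖ * ‖ht - hr‖) ≤ ε) :
    ‖perpComp (hr - hs) (ht - hs)‖ ^ 2 ≤ 2 * ε * ‖hr - hs‖ ^ 2 :=
  straightening_lemma_general hs hr ht ε hloss
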